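/- arXiv:2205.12806 — 5 statements merged into one kernel-verified Lean document; each statement's English description precedes it below -/
import Mathlib

section
/- Let V₁, V₂ be finite-dimensional vector spaces, T₁ : V₁ → V₁ and T₂ : V₂ → V₂ nilpotent endomorphisms, and let T = T₁ ⊗ id + id ⊗ T₂ on V₁ ⊗ V₂. Then dim(coker T) ≥ dim(coker T₁) · dim(coker T₂). -/
/-- If `T₁`, `T₂` are nilpotent endomorphisms of finite-dimensional complex vector spaces and
`T = T₁ ⊗ id + id ⊗ T₂`, then `dim (coker T) ≥ dim (coker T₁) * dim (coker T₂)`. -/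
theorem stmt_4 (V₁ V₂ : Type*) [AddCommGroup V₁] [Module ℂ V₁] [FiniteDimensional ℂ V₁]
    [AddCommGroup V₂] [Module ℂ V₂] [FiniteDimensional ℂ V₂]
    (T₁ : Module.End ℂ V₁) (T₂ : Module.End ℂ V₂)
    (h₁ : IsNilpotent T₁) (h₂ : IsNilpotent T₂)
    (T : Module.End ℂ (TensorProduct ℂ V₁ V₂))
    (hT : T = LinearMap.rTensor V₂ T₁ + LinearMap.lTensor V₁ T₂) :
    Module.finrank ℂ (V₁ ⧸ LinearMap.range T₁) *
        Module.finrank ℂ (V₂ ⧸ LinearMap.range T₂)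
      ≤ Module.finrank ℂ (TensorProduct ℂ V₁ V₂ ⧸ LinearMap.range T) := by
  set Q : TensorProduct ℂ V₁ V₂ →ₗ[ℂ]
      TensorProduct ℂ (V₁ ⧸ LinearMap.range T₁) (V₂ ⧸ LinearMap.range T₂) :=
    TensorProduct.map (LinearMap.range T₁).mkQ (LinearMap.range T₂).mkQ with hQ
  have hQsurj : Function.Surjective Q :=
    TensorProduct.map_surjective (Submodule.mkQ_surjective _) (Submodule.mkQ_surjective _)
  have hle : LinearMap.range T ≤ LinearMap.ker Q := by
    rintro _ ⟨x, rfl⟩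
    have : Q.comp T = 0 := by
      rw [hT]
      apply TensorProduct.ext'
      intro a b
      simp only [LinearMap.comp_apply, LinearMap.add_apply, LinearMap.rTensor_tmul,
        LinearMap.lTensor_tmul, hQ, map_add, TensorProduct.map_tmul, Submodule.mkQ_apply]
      have ha : Submodule.Quotient.mk (T₁ a) = (0 : V₁ ⧸ LinearMap.range T₁) :=
        (Submodule.Quotient.mk_eq_zero _).2 ⟨a, rfl⟩
      have hb : Submodule.Quotient.mk (T₂ b) = (0 : V₂ ⧸ LinearMap.range T₂) :=
        (Submodule.Quotient.mk_eq_zero _).2 ⟨b, rfl⟩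
      rw [ha, hb, TensorProduct.zero_tmul, TensorProduct.tmul_zero, add_zero]
      rfl
    simpa using LinearMap.congr_fun this x
  set φ := (LinearMap.range T).liftQ Q hle with hφ
  have hφsurj : Function.Surjective φ := by
    intro y
    obtain ⟨x, rfl⟩ := hQsurj y
    exact ⟨Submodule.Quotient.mk x, rfl⟩
  calc Module.finrank ℂ (V₁ ⧸ LinearMap.range T₁) *
        Module.finrank ℂ (V₂ ⧸ LinearMap.range T₂)
      = Module.finrank ℂ
          (TensorProduct ℂ (V₁ ⧸ LinearMap.range T₁) (V₂ ⧸ LinearMap.range T₂)) := by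
        rw [Module.finrank_tensorProduct]
    _ ≤ Module.finrank ℂ (TensorProduct ℂ V₁ V₂ ⧸ LinearMap.range T) := by
        have := LinearMap.finrank_range_le φ
        rwa [LinearMap.range_eq_top.2 hφsurj, finrank_top] at this
end

section
/- Let T₁ : V₁ → V₁ and T₂ : V₂ → V₂ be nilpotent endomorphisms of finite-dimensional vector spaces and T = T₁⊗id + id⊗T₂. Then im(T₁) ⊗ ker(T₂) ⊆ im(T) and ker(T₁) ⊗ im(T₂) ⊆ im(T). -/
/-- The image of the canonical map `p ⊗ q → V₁ ⊗ V₂` for submodules `p ⊆ V₁`, `q ⊆ V₂`. -/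
noncomputable def tensorSub {K V₁ V₂ : Type*} [Field K] [AddCommGroup V₁] [Module K V₁]
    [AddCommGroup V₂] [Module K V₂] (p : Submodule K V₁) (q : Submodule K V₂) :
    Submodule K (TensorProduct K V₁ V₂) :=
  LinearMap.range (TensorProduct.map p.subtype q.subtype)

/-- For nilpotent endomorphisms `T₁`, `T₂` of finite-dimensional complex vector spaces and
`T = T₁ ⊗ id + id ⊗ T₂`, the subspaces `im T₁ ⊗ ker T₂` and `ker T₁ ⊗ im T₂` are contained
in `im T`. -/
theorem stmt_6 (V₁ V₂ : Type*) [AddCommGroup V₁] [Module ℂ V₁] [FiniteDimensional ℂ V₁]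
    [AddCommGroup V₂] [Module ℂ V₂] [FiniteDimensional ℂ V₂]
    (T₁ : Module.End ℂ V₁) (T₂ : Module.End ℂ V₂)
    (h₁ : IsNilpotent T₁) (h₂ : IsNilpotent T₂)
    (T : Module.End ℂ (TensorProduct ℂ V₁ V₂))
    (hT : T = LinearMap.rTensor V₂ T₁ + LinearMap.lTensor V₁ T₂) :
    tensorSub (LinearMap.range T₁) (LinearMap.ker T₂) ≤ LinearMap.range T ∧
    tensorSub (LinearMap.ker T₁) (LinearMap.range T₂) ≤ LinearMap.range T := by
  constructor
  · rintro z ⟨w, rfl⟩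
    induction w using TensorProduct.induction_on with
    | zero => simp
    | tmul a b =>
      obtain ⟨a, x, rfl⟩ := a
      obtain ⟨b, hb⟩ := b
      refine ⟨x ⊗ₜ (b : V₂), ?_⟩
      have hb' : T₂ b = 0 := hb
      simp [hT, LinearMap.rTensor_tmul, LinearMap.lTensor_tmul, hb']
    | add u v hu hv =>
      rw [map_add]
      exact Submodule.add_mem _ hu hv
  · rintro z ⟨w, rfl⟩
    induction w using TensorProduct.induction_on with
    | zero => simp
    | tmul a b =>
      obtain ⟨a, ha⟩ := a
      obtain ⟨b, y, rfl⟩ := b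
      refine ⟨(a : V₁) ⊗ₜ y, ?_⟩
      have ha' : T₁ a = 0 := ha
      simp [hT, LinearMap.rTensor_tmul, LinearMap.lTensor_tmul, ha']
    | add u v hu hv =>
      rw [map_add]
      exact Submodule.add_mem _ hu hv
end

section
/- Let V₁, V₂ be finite-dimensional vector spaces, T₁, T₂ nilpotent endomorphisms, T = T₁⊗id + id⊗T₂. If im(T₁) ⊆ ker(T₁) (i.e. T₁² = 0), then dim coker T = τ₁τ₂ + ν₁ν₂, where τᵢ = dim coker Tᵢ and νᵢ = dim(ker Tᵢ ∩ im Tᵢ). -/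
/-!
Split `V₁ = J ⊕ C ⊕ T₁(C)` with `J ⊕ T₁(C) = ker T₁`; since `T₁² = 0`, `T₁` vanishes on `J` and
maps the first copy of `C` onto the second, so on `V₁ ⊗ V₂` the operator `T` is
`id ⊗ T₂` on `J ⊗ V₂`, and on `(C ⊗ V₂)²` it is `(x, z) ↦ (B x, x + B z)` with `B = id ⊗ T₂`.
The kernel of the latter is `{(-B z, z) | B² z = 0}`, so
`dim ker T = dim J · dim ker T₂ + dim C · dim ker T₂²`, and
`dim ker T₂² = dim ker T₂ + dim (ker T₂ ∩ im T₂)` because `T₂` maps `ker T₂²` onto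
`ker T₂ ∩ im T₂`. For endomorphisms of finite-dimensional spaces `dim coker = dim ker`.
-/

open LinearMap Module TensorProduct

section

variable {k : Type*} [Field k] {V W M : Type*} [AddCommGroup V] [Module k V]
  [AddCommGroup W] [Module k W] [AddCommGroup M] [Module k M]

theorem finrank_quotient_range_eq_finrank_ker [FiniteDimensional k V] (f : Module.End k V) :
    finrank k (V ⧸ range f) = finrank k (ker f) := by
  have := (range f).finrank_quotient_add_finrank
  have := f.finrank_range_add_finrank_ker
  omega

theorem finrank_ker_eq_of_comp_eq (e : V ≃ₗ[k] M) {S : Module.End k V} {S' : Module.End k M}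
    (h : e ∘ₗ S = S' ∘ₗ e) : finrank k (ker S) = finrank k (ker S') := by
  have : ker S = (ker S').comap (e : V →ₗ[k] M) := by
    rw [← ker_comp, ← h, LinearEquiv.ker_comp]
  rw [this, Submodule.comap_equiv_eq_map_symm, LinearEquiv.finrank_map_eq]

theorem finrank_ker_prodMap [FiniteDimensional k V] [FiniteDimensional k M]
    (f : Module.End k V) (g : Module.End k M) :
    finrank k (ker (f.prodMap g)) = finrank k (ker f) + finrank k (ker g) := by
  have hdisj : (ker f).map (inl k V M) ⊓ (ker g).map (inr k V M) = ⊥ :=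
    (disjoint_inl_inr.mono map_le_range map_le_range).eq_bot
  have := Submodule.finrank_sup_add_finrank_inf_eq ((ker f).map (inl k V M))
    ((ker g).map (inr k V M))
  rwa [hdisj, finrank_bot, add_zero,
    ← (Submodule.equivMapOfInjective _ inl_injective _).finrank_eq,
    ← (Submodule.equivMapOfInjective _ inr_injective _).finrank_eq,
    ← LinearMap.prod_eq_sup_map, ← ker_prodMap] at this

theorem map_ker_mul_self (f : Module.End k V) : (ker (f * f)).map f = ker f ⊓ range f := by
  ext y
  constructor
  · rintro ⟨x, hx, rfl⟩
    exact ⟨hx, x, rfl⟩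
  · rintro ⟨hy, x, rfl⟩
    exact ⟨x, hy, rfl⟩

theorem finrank_ker_mul_self [FiniteDimensional k V] (f : Module.End k V) :
    finrank k (ker (f * f)) = finrank k (ker f) + finrank k ↥(ker f ⊓ range f) := by
  have hle : ker f ≤ ker (f * f) := fun x hx => by simp_all [mem_ker]
  have := (f.domRestrict (ker (f * f))).finrank_range_add_finrank_ker
  rw [range_domRestrict, ker_domRestrict, map_ker_mul_self,
    (Submodule.comapSubtypeEquivOfLe hle).finrank_eq] at this
  omega

theorem finrank_ker_prodMap_self_add_inr_comp_fst [FiniteDimensional k V] (B : Module.End k V) :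
    finrank k (ker (B.prodMap B + inr k V V ∘ₗ fst k V V)) = finrank k (ker (B * B)) := by
  have hker : ker (B.prodMap B + inr k V V ∘ₗ fst k V V) = (ker (B * B)).map ((-B).prod id) := by
    ext ⟨x, z⟩
    simp only [mem_ker, LinearMap.add_apply, prodMap_apply, coe_comp, coe_inr, coe_fst,
      Function.comp_apply, Prod.mk_add_mk, add_zero, Prod.mk_eq_zero, Submodule.mem_map,
      End.mul_apply, LinearMap.prod_apply, LinearMap.coe_neg, id_coe, Function.prod_apply,
      Pi.neg_apply, id_eq, Prod.mk.injEq, exists_eq_right_right]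
    constructor
    · rintro ⟨hx, hz⟩
      obtain rfl := eq_neg_of_add_eq_zero_right hz
      exact ⟨by simpa using hx, rfl⟩
    · rintro ⟨hz, rfl⟩
      simp [hz]
  rw [hker, ← (Submodule.equivMapOfInjective _ (fun _ _ h => (Prod.ext_iff.mp h).2) _).finrank_eq]

theorem finrank_ker_lTensor (f : Module.End k W) :
    finrank k (ker (lTensor V f)) = finrank k V * finrank k (ker f) := by
  have hex := Module.Flat.lTensor_exact V (LinearMap.exact_subtype_ker_map f)
  rw [LinearMap.exact_iff.mp hex, LinearMap.finrank_range_of_inj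
    (Module.Flat.lTensor_preserves_injective_linearMap _ (Submodule.injective_subtype _)),
    Module.finrank_tensorProduct]

def kroneckerSum (f : Module.End k V) (g : Module.End k W) : Module.End k (V ⊗[k] W) :=
  rTensor W f + lTensor V g

theorem finrank_ker_kroneckerSum_eq_of_comp_eq (e : V ≃ₗ[k] M) {f : Module.End k V}
    {f' : Module.End k M} (h : e ∘ₗ f = f' ∘ₗ e) (g : Module.End k W) :
    finrank k (ker (kroneckerSum f g)) = finrank k (ker (kroneckerSum f' g)) := by
  refine finrank_ker_eq_of_comp_eq (TensorProduct.congr e (.refl k W)) ?_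
  ext v w
  simpa [kroneckerSum] using congrArg (· ⊗ₜ[k] w) (LinearMap.congr_fun h v)

theorem prodLeft_comp_kroneckerSum_prodMap (f : Module.End k V) (f' : Module.End k M)
    (g : Module.End k W) :
    prodLeft k k V M W ∘ₗ kroneckerSum (f.prodMap f') g =
      (kroneckerSum f g).prodMap (kroneckerSum f' g) ∘ₗ prodLeft k k V M W := by
  ext <;> simp [kroneckerSum]

theorem prodLeft_comp_kroneckerSum_inr_comp_fst (g : Module.End k W) :
    prodLeft k k V V W ∘ₗ kroneckerSum (inr k V V ∘ₗ fst k V V) g =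
      ((lTensor V g).prodMap (lTensor V g) + inr k _ _ ∘ₗ fst k _ _) ∘ₗ prodLeft k k V V W := by
  ext <;> simp [kroneckerSum]

theorem finrank_ker_kroneckerSum_zero (g : Module.End k W) :
    finrank k (ker (kroneckerSum (0 : Module.End k V) g)) = finrank k V * finrank k (ker g) := by
  rw [kroneckerSum, rTensor_zero, zero_add, finrank_ker_lTensor]

section FiniteDimensional

variable [FiniteDimensional k V] [FiniteDimensional k W] [FiniteDimensional k M]

theorem finrank_ker_kroneckerSum_prodMap (f : Module.End k V) (f' : Module.End k M)
    (g : Module.End k W) :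
    finrank k (ker (kroneckerSum (f.prodMap f') g)) =
      finrank k (ker (kroneckerSum f g)) + finrank k (ker (kroneckerSum f' g)) := by
  rw [finrank_ker_eq_of_comp_eq _ (prodLeft_comp_kroneckerSum_prodMap f f' g),
    finrank_ker_prodMap]

theorem finrank_ker_kroneckerSum_inr_comp_fst (g : Module.End k W) :
    finrank k (ker (kroneckerSum (inr k V V ∘ₗ fst k V V) g)) =
      finrank k V * finrank k (ker (g * g)) := by
  rw [finrank_ker_eq_of_comp_eq _ (prodLeft_comp_kroneckerSum_inr_comp_fst g),
    finrank_ker_prodMap_self_add_inr_comp_fst, ← lTensor_mul, finrank_ker_lTensor]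

theorem exists_linearEquiv_prod_of_range_le_ker {f : Module.End k V} (hf : range f ≤ ker f) :
    ∃ (J : Submodule k (ker f)) (C : Submodule k V) (e : (J × C × C) ≃ₗ[k] V),
      e ∘ₗ (0 : Module.End k J).prodMap (inr k C C ∘ₗ fst k C C) = f ∘ₗ e ∧
      finrank k J + finrank k C = finrank k (ker f) ∧ finrank k C = finrank k (range f) := by
  obtain ⟨C, hC⟩ := Submodule.exists_isCompl (ker f)
  obtain ⟨J, hJ⟩ := Submodule.exists_isCompl ((range f).comap (ker f).subtype)
  have hfJ : finrank k J + finrank k (range f) = finrank k (ker f) := by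
    rw [← (Submodule.comapSubtypeEquivOfLe hf).finrank_eq, add_comm,
      Submodule.finrank_add_eq_of_isCompl hJ]
  have hfC : finrank k C = finrank k (range f) := by
    have := Submodule.finrank_add_eq_of_isCompl hC
    have := f.finrank_range_add_finrank_ker
    omega
  let φ : (J × C × C) →ₗ[k] V :=
    ((ker f).subtype ∘ₗ J.subtype).coprod (C.subtype.coprod (f ∘ₗ C.subtype))
  have hφ (j : J) (c c' : C) : φ (j, c, c') = (j : V) + (c + f c') := rfl
  have hC_of_ker (x : C) (hx : f x = 0) : x = 0 :=
    Subtype.ext (Submodule.disjoint_def.mp hC.disjoint x hx x.2)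
  have hinj : Function.Injective φ := by
    rw [← ker_eq_bot, Submodule.eq_bot_iff]
    rintro ⟨j, c, c'⟩ h
    rw [mem_ker, hφ] at h
    obtain rfl : c = 0 := by
      refine hC_of_ker c ?_
      simpa [(j : ker f).2, mem_ker.mp (hf ⟨c', rfl⟩)] using congrArg f h
    rw [Submodule.coe_zero, zero_add] at h
    obtain rfl : j = 0 := by
      have hj : (j : ker f) = -⟨f c', hf ⟨c', rfl⟩⟩ := Subtype.ext (eq_neg_of_add_eq_zero_left h)
      refine Subtype.ext (Submodule.disjoint_def.mp hJ.disjoint.symm _ j.2 ?_)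
      rw [hj]
      exact neg_mem ⟨c', rfl⟩
    obtain rfl : c' = 0 := hC_of_ker c' (by simpa using h)
    rfl
  refine ⟨J, C, φ.linearEquivOfInjective hinj ?_, ?_, by omega, hfC⟩
  · rw [finrank_prod, finrank_prod]
    have := f.finrank_range_add_finrank_ker
    omega
  · refine LinearMap.ext fun ⟨j, c, c'⟩ => ?_
    simp [hφ, mem_ker.mp (j : ker f).2, mem_ker.mp (hf ⟨c', rfl⟩)]

theorem finrank_ker_kroneckerSum_of_range_le_ker {f : Module.End k V} (hf : range f ≤ ker f)
    (g : Module.End k W) :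
    finrank k (ker (kroneckerSum f g)) =
      finrank k (ker f) * finrank k (ker g)
        + finrank k (range f) * finrank k ↥(ker g ⊓ range g) := by
  obtain ⟨J, C, e, he, hJC, hC⟩ := exists_linearEquiv_prod_of_range_le_ker hf
  rw [← finrank_ker_kroneckerSum_eq_of_comp_eq e he g,
    finrank_ker_kroneckerSum_prodMap, finrank_ker_kroneckerSum_zero,
    finrank_ker_kroneckerSum_inr_comp_fst, finrank_ker_mul_self, ← hJC, ← hC]
  ring

end FiniteDimensional

end

theorem stmt_13_general (V₁ V₂ : Type*) [AddCommGroup V₁] [Module ℂ V₁] [FiniteDimensional ℂ V₁]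
    [AddCommGroup V₂] [Module ℂ V₂] [FiniteDimensional ℂ V₂]
    (T₁ : Module.End ℂ V₁) (T₂ : Module.End ℂ V₂)
    (hsq : LinearMap.range T₁ ≤ LinearMap.ker T₁)
    (T : Module.End ℂ (TensorProduct ℂ V₁ V₂))
    (hT : T = LinearMap.rTensor V₂ T₁ + LinearMap.lTensor V₁ T₂) :
    Module.finrank ℂ (TensorProduct ℂ V₁ V₂ ⧸ LinearMap.range T)
      = Module.finrank ℂ (V₁ ⧸ LinearMap.range T₁) *
          Module.finrank ℂ (V₂ ⧸ LinearMap.range T₂)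
        + Module.finrank ℂ (LinearMap.ker T₁ ⊓ LinearMap.range T₁ : Submodule ℂ V₁) *
            Module.finrank ℂ (LinearMap.ker T₂ ⊓ LinearMap.range T₂ : Submodule ℂ V₂) := by
  rw [finrank_quotient_range_eq_finrank_ker, finrank_quotient_range_eq_finrank_ker,
    finrank_quotient_range_eq_finrank_ker, inf_eq_right.mpr hsq, hT]
  exact finrank_ker_kroneckerSum_of_range_le_ker hsq T₂

/-- Abstract form of Corollary 2.5: for nilpotent endomorphisms `T₁`, `T₂` of
finite-dimensional complex vector spaces with `im T₁ ⊆ ker T₁` (i.e. `T₁² = 0`), and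
`T = T₁ ⊗ id + id ⊗ T₂`, we have `dim coker T = τ₁τ₂ + ν₁ν₂` where
`τᵢ = dim coker Tᵢ` and `νᵢ = dim (ker Tᵢ ⊓ im Tᵢ)`. -/
theorem stmt_13 (V₁ V₂ : Type*) [AddCommGroup V₁] [Module ℂ V₁] [FiniteDimensional ℂ V₁]
    [AddCommGroup V₂] [Module ℂ V₂] [FiniteDimensional ℂ V₂]
    (T₁ : Module.End ℂ V₁) (T₂ : Module.End ℂ V₂)
    (h₁ : IsNilpotent T₁) (h₂ : IsNilpotent T₂)
    (hsq : LinearMap.range T₁ ≤ LinearMap.ker T₁)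
    (T : Module.End ℂ (TensorProduct ℂ V₁ V₂))
    (hT : T = LinearMap.rTensor V₂ T₁ + LinearMap.lTensor V₁ T₂) :
    Module.finrank ℂ (TensorProduct ℂ V₁ V₂ ⧸ LinearMap.range T)
      = Module.finrank ℂ (V₁ ⧸ LinearMap.range T₁) *
          Module.finrank ℂ (V₂ ⧸ LinearMap.range T₂)
        + Module.finrank ℂ (LinearMap.ker T₁ ⊓ LinearMap.range T₁ : Submodule ℂ V₁) *
            Module.finrank ℂ (LinearMap.ker T₂ ⊓ LinearMap.range T₂ : Submodule ℂ V₂) :=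
  stmt_13_general V₁ V₂ T₁ T₂ hsq T hT
end

section
/- Let T₁, T₂ be nilpotent endomorphisms of finite-dimensional vector spaces V₁, V₂ and T = T₁⊗id + id⊗T₂. Suppose W₁ ⊆ V₁ is a subspace with W₁ ∩ (ker T₁ + im T₁) = {0}. Then for any subspace S₂ ⊆ V₂ with T₂ injective on S₂, the restriction of T to W₁ ⊗ S₂ is injective and T(W₁ ⊗ S₂) ∩ (ker(T₁)⊗im(T₂) + im(T₁)⊗ker(T₂)) = {0}. -/
open LinearMap TensorProduct

section

variable {K V₁ V₂ U₁ U₂ : Type*} [Field K] [AddCommGroup V₁] [Module K V₁]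
  [AddCommGroup V₂] [Module K V₂] [AddCommGroup U₁] [Module K U₁] [AddCommGroup U₂] [Module K U₂]

theorem tensorSub_mono {p p' : Submodule K V₁} {q q' : Submodule K V₂}
    (hp : p ≤ p') (hq : q ≤ q') : tensorSub p q ≤ tensorSub p' q' := by
  rintro _ ⟨y, rfl⟩
  exact ⟨map (Submodule.inclusion hp) (Submodule.inclusion hq) y, by
    rw [← comp_apply, ← map_comp]; rfl⟩

theorem rTensor_mem_tensorSub_range (f : V₁ →ₗ[K] U₁) {p : Submodule K V₁}
    {q : Submodule K V₂} {x : V₁ ⊗[K] V₂} (hx : x ∈ tensorSub p q) :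
    rTensor V₂ f x ∈ tensorSub (range f) q := by
  obtain ⟨y, rfl⟩ := hx
  exact ⟨map (f.rangeRestrict ∘ₗ p.subtype) LinearMap.id y, by
    rw [← comp_apply, ← map_comp, rTensor, ← comp_apply, ← map_comp]; rfl⟩

theorem lTensor_mem_tensorSub_range (g : V₂ →ₗ[K] U₂) {p : Submodule K V₁}
    {q : Submodule K V₂} {x : V₁ ⊗[K] V₂} (hx : x ∈ tensorSub p q) :
    lTensor V₁ g x ∈ tensorSub p (range g) := by
  obtain ⟨y, rfl⟩ := hx
  exact ⟨map LinearMap.id (g.rangeRestrict ∘ₗ q.subtype) y, by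
    rw [← comp_apply, ← map_comp, lTensor, ← comp_apply, ← map_comp]; rfl⟩

theorem disjoint_tensorSub_left {A B : Submodule K V₁} (hAB : Disjoint A B)
    (q : Submodule K V₂) : Disjoint (tensorSub A q) (tensorSub B q) := by
  obtain ⟨C, hBC, hCA⟩ := hAB.symm.exists_isCompl
  set π := A.projectionOnto C hCA.symm
  have hπA : π ∘ₗ A.subtype = LinearMap.id := Submodule.projectionOnto_comp_subtype _
  have hπB : π ∘ₗ B.subtype = 0 :=
    LinearMap.ext fun b => by simpa [π] using hBC b.2
  rw [Submodule.disjoint_def]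
  rintro _ ⟨y, rfl⟩ ⟨z, hz⟩
  have hy : lTensor A q.subtype y = 0 := by
    have := congrArg (rTensor V₂ π) hz
    rwa [← comp_apply, ← comp_apply, rTensor_comp_map, rTensor_comp_map, hπA, hπB,
      map_zero_left, LinearMap.zero_apply, eq_comm] at this
  rw [(Module.Flat.lTensor_preserves_injective_linearMap _ q.injective_subtype).eq_iff' (map_zero _)]
    at hy
  rw [hy, map_zero]

theorem disjoint_ker_lTensor_tensorSub {g : V₂ →ₗ[K] U₂} {q : Submodule K V₂}
    (hg : Disjoint (ker g) q) (p : Submodule K V₁) :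
    Disjoint (ker (lTensor V₁ g)) (tensorSub p q) := by
  have hgq : Function.Injective (g ∘ₗ q.subtype) := (injective_iff_map_eq_zero _).mpr
    fun s hs => Subtype.ext (Submodule.disjoint_def.mp hg s hs s.2)
  have hinj : Function.Injective (map p.subtype (g ∘ₗ q.subtype)) := by
    rw [← rTensor_comp_lTensor]
    exact (Module.Flat.rTensor_preserves_injective_linearMap _ p.injective_subtype).comp
      (Module.Flat.lTensor_preserves_injective_linearMap _ hgq)
  rw [Submodule.disjoint_def]
  rintro _ hx ⟨y, rfl⟩
  rw [mem_ker, ← comp_apply, lTensor_comp_map, ← map_zero (map p.subtype (g ∘ₗ q.subtype))]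
    at hx
  rw [hinj hx, map_zero]

theorem eq_zero_of_rTensor_add_lTensor_mem {f : Module.End K V₁} {g : Module.End K V₂}
    {W P : Submodule K V₁} {S : Submodule K V₂} (hWP : Disjoint W P) (hf : range f ≤ P)
    (hg : Disjoint (ker g) S) {x : V₁ ⊗[K] V₂} (hx : x ∈ tensorSub W S)
    (hTx : (rTensor V₂ f + lTensor V₁ g) x ∈ tensorSub P ⊤) : x = 0 := by
  have hgxP : lTensor V₁ g x ∈ tensorSub P ⊤ := by
    have := sub_mem hTx (tensorSub_mono hf le_top (rTensor_mem_tensorSub_range f hx))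
    rwa [LinearMap.add_apply, add_sub_cancel_left] at this
  have hgxW : lTensor V₁ g x ∈ tensorSub W ⊤ :=
    tensorSub_mono le_rfl le_top (lTensor_mem_tensorSub_range g hx)
  have hgx : lTensor V₁ g x = 0 :=
    Submodule.disjoint_def.mp (disjoint_tensorSub_left hWP ⊤) _ hgxW hgxP
  exact Submodule.disjoint_def.mp (disjoint_ker_lTensor_tensorSub hg W) x hgx hx

end

theorem stmt_16_general (V₁ V₂ : Type*) [AddCommGroup V₁] [Module ℂ V₁]
    [AddCommGroup V₂] [Module ℂ V₂]
    (T₁ : Module.End ℂ V₁) (T₂ : Module.End ℂ V₂)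
    (T : Module.End ℂ (TensorProduct ℂ V₁ V₂))
    (hT : T = LinearMap.rTensor V₂ T₁ + LinearMap.lTensor V₁ T₂)
    (W₁ : Submodule ℂ V₁) (hW₁ : W₁ ⊓ (LinearMap.ker T₁ ⊔ LinearMap.range T₁) = ⊥)
    (S₂ : Submodule ℂ V₂) (hS₂ : LinearMap.ker T₂ ⊓ S₂ = ⊥) :
    LinearMap.ker T ⊓ tensorSub W₁ S₂ = ⊥ ∧
    Submodule.map T (tensorSub W₁ S₂) ⊓
        (tensorSub (LinearMap.ker T₁) (LinearMap.range T₂) ⊔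
          tensorSub (LinearMap.range T₁) (LinearMap.ker T₂)) = ⊥ := by
  subst hT
  have key {x} (hx : x ∈ tensorSub W₁ S₂)
      (hTx : (rTensor V₂ T₁ + lTensor V₁ T₂) x ∈ tensorSub (ker T₁ ⊔ range T₁) ⊤) : x = 0 :=
    eq_zero_of_rTensor_add_lTensor_mem (disjoint_iff.mpr hW₁) le_sup_right
      (disjoint_iff.mpr hS₂) hx hTx
  have hU : tensorSub (ker T₁) (range T₂) ⊔ tensorSub (range T₁) (ker T₂) ≤
      tensorSub (ker T₁ ⊔ range T₁) ⊤ :=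
    sup_le (tensorSub_mono le_sup_left le_top) (tensorSub_mono le_sup_right le_top)
  constructor
  · rw [eq_bot_iff]
    rintro x ⟨hTx, hx⟩
    exact key hx (mem_ker.mp hTx ▸ zero_mem _)
  · rw [eq_bot_iff]
    rintro _ ⟨⟨x, hx, rfl⟩, hTx⟩
    rw [Submodule.mem_bot, key hx (hU hTx), map_zero]

/-- Abstract version of the step `U ∩ (f₁+f₂)(A₁⊗B₂) = 0`: for nilpotent `T₁`, `T₂` and
`T = T₁⊗id + id⊗T₂`, if `W₁ ⊓ (ker T₁ + im T₁) = 0` and `T₂` is injective on `S₂`, then `T`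
is injective on `W₁ ⊗ S₂` and `T(W₁ ⊗ S₂) ∩ (ker T₁ ⊗ im T₂ + im T₁ ⊗ ker T₂) = 0`. -/
theorem stmt_16 (V₁ V₂ : Type*) [AddCommGroup V₁] [Module ℂ V₁] [FiniteDimensional ℂ V₁]
    [AddCommGroup V₂] [Module ℂ V₂] [FiniteDimensional ℂ V₂]
    (T₁ : Module.End ℂ V₁) (T₂ : Module.End ℂ V₂)
    (h₁ : IsNilpotent T₁) (h₂ : IsNilpotent T₂)
    (T : Module.End ℂ (TensorProduct ℂ V₁ V₂))
    (hT : T = LinearMap.rTensor V₂ T₁ + LinearMap.lTensor V₁ T₂)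
    (W₁ : Submodule ℂ V₁) (hW₁ : W₁ ⊓ (LinearMap.ker T₁ ⊔ LinearMap.range T₁) = ⊥)
    (S₂ : Submodule ℂ V₂) (hS₂ : LinearMap.ker T₂ ⊓ S₂ = ⊥) :
    LinearMap.ker T ⊓ tensorSub W₁ S₂ = ⊥ ∧
    Submodule.map T (tensorSub W₁ S₂) ⊓
        (tensorSub (LinearMap.ker T₁) (LinearMap.range T₂) ⊔
          tensorSub (LinearMap.range T₁) (LinearMap.ker T₂)) = ⊥ :=
  stmt_16_general V₁ V₂ T₁ T₂ T hT W₁ hW₁ S₂ hS₂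
end

section
/- Let T₁, T₂ be nilpotent endomorphisms of finite-dimensional complex vector spaces V₁, V₂, and T = T₁⊗id + id⊗T₂. Set μᵢ = dim Vᵢ, τᵢ = dim coker Tᵢ, νᵢ = dim(ker Tᵢ ∩ im Tᵢ). Then dim coker T ≤ τ₁τ₂ + (μ₁−τ₁)(μ₂−τ₂) − ν₂(μ₁−τ₁−ν₁) − ν₁(μ₂−τ₂−ν₂). -/
open LinearMap TensorProduct Module Submodule

section Aux

variable {A B C D : Type*} [AddCommGroup A] [Module ℂ A] [AddCommGroup B] [Module ℂ B]
  [AddCommGroup C] [Module ℂ C] [AddCommGroup D] [Module ℂ D]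

/-- kernel of `f ⊗ id` -/
lemma ker_rT (f : A →ₗ[ℂ] C) :
    ker (f.rTensor B) = range ((ker f).subtype.rTensor B) :=
  LinearMap.exact_iff.mp <|
    Module.Flat.rTensor_exact (M := B) (LinearMap.exact_subtype_ker_map f)

lemma ker_lT (g : B →ₗ[ℂ] D) :
    ker (g.lTensor A) = range ((ker g).subtype.lTensor A) :=
  LinearMap.exact_iff.mp <|
    Module.Flat.lTensor_exact (M := A) (LinearMap.exact_subtype_ker_map g)

end Aux

section Aux2

variable {A B C D : Type*} [AddCommGroup A] [Module ℂ A] [AddCommGroup B] [Module ℂ B]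
  [AddCommGroup C] [Module ℂ C] [AddCommGroup D] [Module ℂ D]

/-- Master lemma: `(A₀ ⊗ B) ∩ ker (id ⊗ g) ⊆ A₀ ⊗ ker g`. -/
lemma master (A₀ : Submodule ℂ A) (g : B →ₗ[ℂ] D) :
    range (A₀.subtype.rTensor B) ⊓ ker (g.lTensor A)
      ≤ range (TensorProduct.map A₀.subtype (ker g).subtype) := by
  rintro x ⟨⟨y, rfl⟩, hx⟩
  simp only [SetLike.mem_coe, LinearMap.mem_ker] at hx
  have h1 : (g.lTensor A) ((A₀.subtype.rTensor B) y)
      = (A₀.subtype.rTensor D) ((g.lTensor A₀) y) := by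
    rw [← LinearMap.comp_apply, ← LinearMap.comp_apply,
      LinearMap.lTensor_comp_rTensor, LinearMap.rTensor_comp_lTensor]
  rw [h1] at hx
  have hinj : Function.Injective (A₀.subtype.rTensor D) :=
    Module.Flat.rTensor_preserves_injective_linearMap A₀.subtype A₀.injective_subtype
  have h2 : (g.lTensor A₀) y = 0 := by
    apply hinj; rw [hx, map_zero]
  have h3 : y ∈ range ((ker g).subtype.lTensor A₀) := by
    rw [← ker_lT]; exact h2
  obtain ⟨z, rfl⟩ := h3
  refine ⟨z, ?_⟩
  rw [← LinearMap.comp_apply, LinearMap.rTensor_comp_lTensor]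

/-- `ker(f⊗id) ∩ ker(id⊗g) ⊆ ker f ⊗ ker g`. -/
lemma kerker (f : A →ₗ[ℂ] C) (g : B →ₗ[ℂ] D) :
    ker (f.rTensor B) ⊓ ker (g.lTensor A)
      ≤ range (TensorProduct.map (ker f).subtype (ker g).subtype) := by
  rw [ker_rT]
  exact master (ker f) g

/-- `range(f⊗id) ∩ range(id⊗g) ⊆ range f ⊗ range g`. -/
lemma rangerange (f : C →ₗ[ℂ] A) (g : D →ₗ[ℂ] B) :
    range (f.rTensor B) ⊓ range (g.lTensor A)
      ≤ range (TensorProduct.map (range f).subtype (range g).subtype) := by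
  have h1 : range (f.rTensor B) ≤ range ((range f).subtype.rTensor B) := by
    have : f = (range f).subtype.comp f.rangeRestrict := by
      ext x; simp
    rw [this, LinearMap.rTensor_comp]
    exact LinearMap.range_comp_le_range _ _
  have h2 : range (g.lTensor A) ≤ ker ((range g).mkQ.lTensor A) := by
    rintro x ⟨y, rfl⟩
    rw [LinearMap.mem_ker, ← LinearMap.comp_apply, ← LinearMap.lTensor_comp]
    have : (range g).mkQ.comp g = 0 := by
      ext v; simp
    rw [this, LinearMap.lTensor_zero, LinearMap.zero_apply]
  have h3 := master (range f) (range g).mkQ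
  rw [Submodule.ker_mkQ] at h3
  exact le_trans (inf_le_inf h1 h2) h3

end Aux2

section Aux3

variable {A B C D : Type*} [AddCommGroup A] [Module ℂ A] [AddCommGroup B] [Module ℂ B]
  [AddCommGroup C] [Module ℂ C] [AddCommGroup D] [Module ℂ D]

/-- `range (map f g)` only depends on the ranges of `f` and `g`. -/
lemma pq_range (f : C →ₗ[ℂ] A) (g : D →ₗ[ℂ] B) :
    range (TensorProduct.map f g)
      = range (TensorProduct.map (range f).subtype (range g).subtype) := by
  have hf : f = (range f).subtype.comp f.rangeRestrict := by ext x; simp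
  have hg : g = (range g).subtype.comp g.rangeRestrict := by ext x; simp
  have hsurj : Function.Surjective (TensorProduct.map f.rangeRestrict g.rangeRestrict) := by
    have : TensorProduct.map f.rangeRestrict g.rangeRestrict
        = (f.rangeRestrict.rTensor (range g)).comp (g.rangeRestrict.lTensor C) := by
      rw [LinearMap.rTensor_comp_lTensor]
    rw [this]
    exact (LinearMap.rTensor_surjective _ f.surjective_rangeRestrict).comp
      (LinearMap.lTensor_surjective _ g.surjective_rangeRestrict)
  conv_lhs => rw [hf, hg, TensorProduct.map_comp]
  rw [LinearMap.range_comp, LinearMap.range_eq_top.mpr hsurj, Submodule.map_top]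

lemma map_subtype_injective (A₀ : Submodule ℂ A) (B₀ : Submodule ℂ B) :
    Function.Injective (TensorProduct.map A₀.subtype B₀.subtype) := by
  rw [← LinearMap.rTensor_comp_lTensor]
  exact (Module.Flat.rTensor_preserves_injective_linearMap A₀.subtype
      A₀.injective_subtype).comp
    (Module.Flat.lTensor_preserves_injective_linearMap B₀.subtype B₀.injective_subtype)

lemma finrank_pq_le (A₀ : Submodule ℂ A) (B₀ : Submodule ℂ B)
    [FiniteDimensional ℂ A₀] [FiniteDimensional ℂ B₀] :
    finrank ℂ (range (TensorProduct.map A₀.subtype B₀.subtype))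
      ≤ finrank ℂ A₀ * finrank ℂ B₀ := by
  have := LinearMap.finrank_range_le (TensorProduct.map A₀.subtype B₀.subtype)
  rwa [Module.finrank_tensorProduct] at this

/-- rank–nullity for the restriction of `f` to a submodule. -/
lemma rank_nullity_restrict [FiniteDimensional ℂ A] (f : A →ₗ[ℂ] A) (S : Submodule ℂ A) :
    finrank ℂ (Submodule.map f S) + finrank ℂ (ker f ⊓ S : Submodule ℂ A)
      = finrank ℂ S := by
  have h := LinearMap.finrank_range_add_finrank_ker (f.domRestrict S)
  rw [LinearMap.range_domRestrict, LinearMap.ker_domRestrict] at h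
  have e : (Submodule.comap S.subtype (ker f) : Type _) ≃ₗ[ℂ] (ker f ⊓ S : Submodule ℂ A) := by
    refine (Submodule.equivMapOfInjective S.subtype S.injective_subtype _).trans
      (LinearEquiv.ofEq _ _ ?_)
    rw [Submodule.map_comap_subtype, inf_comm]
  rw [e.finrank_eq] at h
  exact h

/-- the image under `S.subtype` of the kernel of the restriction. -/
lemma map_ker_restrict (f : A →ₗ[ℂ] A) (S : Submodule ℂ A) (h : ∀ x ∈ S, f x ∈ S) :
    Submodule.map S.subtype (ker (f.restrict h)) = ker f ⊓ S := by
  ext w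
  simp only [Submodule.mem_map, LinearMap.mem_ker, Submodule.mem_inf]
  constructor
  · rintro ⟨⟨v, hv⟩, hk, rfl⟩
    have : f v = 0 := congrArg Subtype.val hk
    exact ⟨this, hv⟩
  · rintro ⟨h1, h2⟩
    exact ⟨⟨w, h2⟩, Subtype.ext h1, rfl⟩

lemma map_range_restrict (f : A →ₗ[ℂ] A) (S : Submodule ℂ A) (h : ∀ x ∈ S, f x ∈ S) :
    Submodule.map S.subtype (range (f.restrict h)) = Submodule.map f S := by
  ext w
  simp only [Submodule.mem_map, LinearMap.mem_range]
  constructor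
  · rintro ⟨v, ⟨u, rfl⟩, rfl⟩
    refine ⟨↑u, u.2, ?_⟩
    have := LinearMap.restrict_apply h u
    exact (congrArg Subtype.val this).symm
  · rintro ⟨u, hu, rfl⟩
    exact ⟨f.restrict h ⟨u, hu⟩, ⟨⟨u, hu⟩, rfl⟩, rfl⟩

end Aux3

section KeyLemma

variable {V₁ V₂ : Type*} [AddCommGroup V₁] [Module ℂ V₁] [FiniteDimensional ℂ V₁]
  [AddCommGroup V₂] [Module ℂ V₂] [FiniteDimensional ℂ V₂]

lemma key_ker_bound (T₁ : Module.End ℂ V₁) (T₂ : Module.End ℂ V₂) :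
    finrank ℂ (ker (T₁.rTensor V₂ + T₂.lTensor V₁))
      ≤ finrank ℂ (ker T₁) * finrank ℂ (ker T₂)
        + finrank ℂ (ker T₁ ⊓ range T₁ : Submodule ℂ V₁)
            * finrank ℂ (ker T₂ ⊓ range T₂ : Submodule ℂ V₂)
        + finrank ℂ (Submodule.map T₁ (range T₁))
            * finrank ℂ (Submodule.map T₂ (range T₂)) := by
  set P : Module.End ℂ (V₁ ⊗[ℂ] V₂) := T₁.rTensor V₂ with hP
  set Q : Module.End ℂ (V₁ ⊗[ℂ] V₂) := T₂.lTensor V₁ with hQdef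
  set K₁ := ker T₁; set K₂ := ker T₂; set R₁ := range T₁; set R₂ := range T₂
  set N : Submodule ℂ (V₁ ⊗[ℂ] V₂) := ker (P + Q) with hN
  -- commutation of P and Q
  have hPQ : P.comp Q = Q.comp P := by
    rw [hP, hQdef, LinearMap.rTensor_comp_lTensor, LinearMap.lTensor_comp_rTensor]
  -- restricted endomorphisms on R₁, R₂
  have h₁r : ∀ x ∈ R₁, T₁ x ∈ R₁ := fun x _ => ⟨x, rfl⟩
  have h₂r : ∀ x ∈ R₂, T₂ x ∈ R₂ := fun x _ => ⟨x, rfl⟩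
  set T₁r : Module.End ℂ R₁ := T₁.restrict h₁r
  set T₂r : Module.End ℂ R₂ := T₂.restrict h₂r
  have hcomm₁ : P.comp (TensorProduct.map R₁.subtype R₂.subtype)
      = (TensorProduct.map R₁.subtype R₂.subtype).comp (T₁r.rTensor R₂) :=
    TensorProduct.ext' fun a b => by
      simp [P, T₁r, LinearMap.restrict_coe_apply]
  have hcomm₂ : Q.comp (TensorProduct.map R₁.subtype R₂.subtype)
      = (TensorProduct.map R₁.subtype R₂.subtype).comp (T₂r.lTensor R₁) :=
    TensorProduct.ext' fun a b => by
      simp [Q, T₂r, LinearMap.restrict_coe_apply]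
  set W : Submodule ℂ (V₁ ⊗[ℂ] V₂) :=
    N ⊓ range (TensorProduct.map R₁.subtype R₂.subtype) with hW
  -- step 1 : N ⊓ ker P ⊆ K₁ ⊗ K₂
  have step1 : ker P ⊓ N ≤ range (TensorProduct.map K₁.subtype K₂.subtype) := by
    rintro x ⟨hxP, hxN⟩
    simp only [SetLike.mem_coe, LinearMap.mem_ker] at hxP hxN
    have hxQ : Q x = 0 := by
      have : P x + Q x = 0 := hxN
      rw [hxP, zero_add] at this; exact this
    exact kerker T₁ T₂ ⟨hxP, hxQ⟩
  -- step 2 : P(N) ⊆ W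
  have step2 : Submodule.map P N ≤ W := by
    rintro _ ⟨x, hxN, rfl⟩
    simp only [SetLike.mem_coe, LinearMap.mem_ker] at hxN
    constructor
    · show P x ∈ N
      rw [hN, LinearMap.mem_ker]
      have : (P + Q) (P x) = P ((P + Q) x) := by
        simp only [LinearMap.add_apply]
        rw [show Q (P x) = P (Q x) from congrFun (congrArg DFunLike.coe hPQ.symm) x,
          map_add]
      rw [this, hxN, map_zero]
    · show P x ∈ range (TensorProduct.map R₁.subtype R₂.subtype)
      apply rangerange T₁ T₂
      refine ⟨⟨x, rfl⟩, ⟨-x, ?_⟩⟩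
      have : P x + Q x = 0 := hxN
      rw [map_neg]; exact neg_eq_of_add_eq_zero_left this
  -- step 3 : ker P ⊓ W ⊆ (K₁ ⊓ R₁) ⊗ (K₂ ⊓ R₂)
  have step3 : ker P ⊓ W ≤ range (TensorProduct.map (K₁ ⊓ R₁).subtype (K₂ ⊓ R₂).subtype) := by
    rintro x ⟨hxP, hxN, hxRR⟩
    simp only [SetLike.mem_coe, LinearMap.mem_ker] at hxP hxN
    obtain ⟨y, rfl⟩ := hxRR
    set m := TensorProduct.map R₁.subtype R₂.subtype
    have hxQ : Q (m y) = 0 := by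
      have : P (m y) + Q (m y) = 0 := hxN
      rw [hxP, zero_add] at this; exact this
    have hu : (T₁r.rTensor R₂) y = 0 := by
      apply map_subtype_injective R₁ R₂
      rw [map_zero, ← LinearMap.comp_apply, ← hcomm₁, LinearMap.comp_apply, hxP]
    have hv : (T₂r.lTensor R₁) y = 0 := by
      apply map_subtype_injective R₁ R₂
      rw [map_zero, ← LinearMap.comp_apply, ← hcomm₂, LinearMap.comp_apply, hxQ]
    have hy := kerker T₁r T₂r ⟨hu, hv⟩
    obtain ⟨z, rfl⟩ := hy
    have hx' : m ((TensorProduct.map (ker T₁r).subtype (ker T₂r).subtype) z)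
        = (TensorProduct.map (R₁.subtype.comp (ker T₁r).subtype)
            (R₂.subtype.comp (ker T₂r).subtype)) z := by
      rw [TensorProduct.map_comp, LinearMap.comp_apply]
    rw [hx']
    have hrw := pq_range (R₁.subtype.comp (ker T₁r).subtype) (R₂.subtype.comp (ker T₂r).subtype)
    have hr1 : range (R₁.subtype.comp (ker T₁r).subtype) = K₁ ⊓ R₁ := by
      rw [LinearMap.range_comp, Submodule.range_subtype, map_ker_restrict]
    have hr2 : range (R₂.subtype.comp (ker T₂r).subtype) = K₂ ⊓ R₂ := by
      rw [LinearMap.range_comp, Submodule.range_subtype, map_ker_restrict]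
    rw [hr1, hr2] at hrw
    rw [← hrw]
    exact LinearMap.mem_range_self _ z
  -- step 4 : P(W) ⊆ (T₁ R₁) ⊗ (T₂ R₂)
  have step4 : Submodule.map P W
      ≤ range (TensorProduct.map (Submodule.map T₁ R₁).subtype
          (Submodule.map T₂ R₂).subtype) := by
    rintro _ ⟨x, ⟨hxN, hxRR⟩, rfl⟩
    simp only [SetLike.mem_coe, LinearMap.mem_ker] at hxN
    obtain ⟨y, rfl⟩ := hxRR
    set m := TensorProduct.map R₁.subtype R₂.subtype
    set u := (T₁r.rTensor R₂) y
    set v := (T₂r.lTensor R₁) y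
    have hPm : P (m y) = m u := by
      rw [← LinearMap.comp_apply, hcomm₁, LinearMap.comp_apply]
    have hQm : Q (m y) = m v := by
      rw [← LinearMap.comp_apply, hcomm₂, LinearMap.comp_apply]
    have huv : u = (T₂r.lTensor R₁) (-y) := by
      have h0 : m (u + v) = 0 := by
        rw [map_add, ← hPm, ← hQm]; exact hxN
      have := map_subtype_injective R₁ R₂ (by rw [h0, map_zero] : m (u + v) = m 0)
      rw [map_neg]
      exact eq_neg_of_add_eq_zero_left this
    have hu : u ∈ range (T₁r.rTensor R₂) ⊓ range (T₂r.lTensor R₁) :=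
      ⟨⟨y, rfl⟩, ⟨-y, huv.symm⟩⟩
    have hu' := rangerange T₁r T₂r hu
    obtain ⟨z, hz⟩ := hu'
    have hx' : P (m y) = (TensorProduct.map (R₁.subtype.comp (range T₁r).subtype)
        (R₂.subtype.comp (range T₂r).subtype)) z := by
      rw [hPm, ← hz, TensorProduct.map_comp, LinearMap.comp_apply]
    rw [hx']
    have hrw := pq_range (R₁.subtype.comp (range T₁r).subtype)
      (R₂.subtype.comp (range T₂r).subtype)
    have hr1 : range (R₁.subtype.comp (range T₁r).subtype) = Submodule.map T₁ R₁ := by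
      rw [LinearMap.range_comp, Submodule.range_subtype, map_range_restrict]
    have hr2 : range (R₂.subtype.comp (range T₂r).subtype) = Submodule.map T₂ R₂ := by
      rw [LinearMap.range_comp, Submodule.range_subtype, map_range_restrict]
    rw [hr1, hr2] at hrw
    rw [← hrw]
    exact LinearMap.mem_range_self _ z
  -- assemble
  have hrnN := rank_nullity_restrict P N
  have hrnW := rank_nullity_restrict P W
  have b1 : finrank ℂ (Submodule.map P N) ≤ finrank ℂ W := Submodule.finrank_mono step2
  have b2 : finrank ℂ (ker P ⊓ N : Submodule ℂ (V₁ ⊗[ℂ] V₂))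
      ≤ finrank ℂ K₁ * finrank ℂ K₂ :=
    le_trans (Submodule.finrank_mono step1) (finrank_pq_le K₁ K₂)
  have b3 : finrank ℂ (ker P ⊓ W : Submodule ℂ (V₁ ⊗[ℂ] V₂))
      ≤ finrank ℂ (K₁ ⊓ R₁ : Submodule ℂ V₁) * finrank ℂ (K₂ ⊓ R₂ : Submodule ℂ V₂) :=
    le_trans (Submodule.finrank_mono step3) (finrank_pq_le _ _)
  have b4 : finrank ℂ (Submodule.map P W)
      ≤ finrank ℂ (Submodule.map T₁ R₁) * finrank ℂ (Submodule.map T₂ R₂) :=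
    le_trans (Submodule.finrank_mono step4) (finrank_pq_le _ _)
  omega

end KeyLemma


/-- Abstract linear-algebra form of the upper bound in Theorem 1.1: for nilpotent `T₁`, `T₂`
on finite-dimensional complex vector spaces and `T = T₁⊗id + id⊗T₂`, with `μᵢ = dim Vᵢ`,
`τᵢ = dim coker Tᵢ`, `νᵢ = dim (ker Tᵢ ⊓ im Tᵢ)`, we have
`dim coker T ≤ τ₁τ₂ + (μ₁−τ₁)(μ₂−τ₂) − ν₂(μ₁−τ₁−ν₁) − ν₁(μ₂−τ₂−ν₂)`, stated additively. -/
theorem stmt_19 (V₁ V₂ : Type*) [AddCommGroup V₁] [Module ℂ V₁] [FiniteDimensional ℂ V₁]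
    [AddCommGroup V₂] [Module ℂ V₂] [FiniteDimensional ℂ V₂]
    (T₁ : Module.End ℂ V₁) (T₂ : Module.End ℂ V₂)
    (h₁ : IsNilpotent T₁) (h₂ : IsNilpotent T₂)
    (T : Module.End ℂ (TensorProduct ℂ V₁ V₂))
    (hT : T = LinearMap.rTensor V₂ T₁ + LinearMap.lTensor V₁ T₂)
    (μ₁ τ₁ ν₁ μ₂ τ₂ ν₂ : ℕ)
    (hμ₁ : μ₁ = Module.finrank ℂ V₁) (hμ₂ : μ₂ = Module.finrank ℂ V₂)
    (hτ₁ : τ₁ = Module.finrank ℂ (V₁ ⧸ LinearMap.range T₁))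
    (hτ₂ : τ₂ = Module.finrank ℂ (V₂ ⧸ LinearMap.range T₂))
    (hν₁ : ν₁ = Module.finrank ℂ (LinearMap.ker T₁ ⊓ LinearMap.range T₁ : Submodule ℂ V₁))
    (hν₂ : ν₂ = Module.finrank ℂ (LinearMap.ker T₂ ⊓ LinearMap.range T₂ : Submodule ℂ V₂)) :
    Module.finrank ℂ (TensorProduct ℂ V₁ V₂ ⧸ LinearMap.range T)
        + ν₂ * (μ₁ - τ₁ - ν₁) + ν₁ * (μ₂ - τ₂ - ν₂)
      ≤ τ₁ * τ₂ + (μ₁ - τ₁) * (μ₂ - τ₂) := by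
  -- dim coker T = dim ker T
  have hcoker : Module.finrank ℂ (TensorProduct ℂ V₁ V₂ ⧸ LinearMap.range T)
      = finrank ℂ (ker T) := by
    have e1 := Submodule.finrank_quotient_add_finrank (LinearMap.range T)
    have e2 := LinearMap.finrank_range_add_finrank_ker T
    omega
  -- τᵢ = dim ker Tᵢ
  have hτ₁' : τ₁ = finrank ℂ (ker T₁) := by
    have e1 := Submodule.finrank_quotient_add_finrank (LinearMap.range T₁)
    have e2 := LinearMap.finrank_range_add_finrank_ker T₁
    omega
  have hτ₂' : τ₂ = finrank ℂ (ker T₂) := by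
    have e1 := Submodule.finrank_quotient_add_finrank (LinearMap.range T₂)
    have e2 := LinearMap.finrank_range_add_finrank_ker T₂
    omega
  -- ranks
  set r₁ := finrank ℂ (range T₁) with hr₁
  set r₂ := finrank ℂ (range T₂) with hr₂
  set q₁ := finrank ℂ (Submodule.map T₁ (range T₁)) with hq₁
  set q₂ := finrank ℂ (Submodule.map T₂ (range T₂)) with hq₂
  have hμr₁ : μ₁ = τ₁ + r₁ := by
    have := LinearMap.finrank_range_add_finrank_ker T₁; omega
  have hμr₂ : μ₂ = τ₂ + r₂ := by
    have := LinearMap.finrank_range_add_finrank_ker T₂; omega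
  have hqν₁ : q₁ + ν₁ = r₁ := by
    have := rank_nullity_restrict T₁ (range T₁); omega
  have hqν₂ : q₂ + ν₂ = r₂ := by
    have := rank_nullity_restrict T₂ (range T₂); omega
  -- key bound
  have hkey := key_ker_bound T₁ T₂
  rw [← hτ₁', ← hτ₂', ← hν₁, ← hν₂, ← hq₁, ← hq₂] at hkey
  have hkerT : finrank ℂ (ker T) ≤ τ₁ * τ₂ + ν₁ * ν₂ + q₁ * q₂ := by
    rw [hT]; exact hkey
  rw [hcoker]
  have e1 : μ₁ - τ₁ = ν₁ + q₁ := by omega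
  have e2 : μ₁ - τ₁ - ν₁ = q₁ := by omega
  have e3 : μ₂ - τ₂ = ν₂ + q₂ := by omega
  have e4 : μ₂ - τ₂ - ν₂ = q₂ := by omega
  rw [e2, e4, e1, e3]
  calc finrank ℂ (ker T) + ν₂ * q₁ + ν₁ * q₂
      ≤ (τ₁ * τ₂ + ν₁ * ν₂ + q₁ * q₂) + ν₂ * q₁ + ν₁ * q₂ := by omega
    _ = τ₁ * τ₂ + (ν₁ + q₁) * (ν₂ + q₂) := by ring
end
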